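/- arXiv:1907.11588 — 5 statements merged into one kernel-verified Lean document; each statement's English description precedes it below -/
import Mathlib

section
/- Let X be a separable Banach space with its Borel σ-algebra, (Ω,F,P) a probability space with a filtration (F_n)_{n≥0}, and let (d_n)_{n≥1}, (e_n)_{n≥1} be X-valued adapted sequences (each d_n, e_n is F_n-measurable). Let (r_n)_{n≥1} be mutually independent Rademacher random variables whose joint σ-algebra is independent of F_∞ := σ(⋃_n F_n). Define the enlarged filtration G_n := σ(F_n ∪ σ(r_1,…,r_n)). Then for every n ≥ 1 and every Borel set A ⊆ X one has, almost surely, E[1_A(r_n d_n) | G_{n-1}] = (1/2) E[1_A(d_n) | F_{n-1}] + (1/2) E[1_{-A}(d_n) | F_{n-1}]. Consequently, if (d_n) and (e_n) are tangent with respect to (F_n), then (r_n d_n) and (r_n e_n) are tangent with respect to (G_n), and each of them is conditionally symmetric, i.e., E[1_A(r_n d_n) | G_{n-1}] = E[1_{-A}(r_n d_n) | G_{n-1}] almost surely for all Borel A ⊆ X and all n. -/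
open MeasureTheory ProbabilityTheory Filter Set
open scoped ENNReal NNReal Topology Pointwise

/-- Two `X`-valued adapted sequences are *tangent* with respect to the (not necessarily
filtered) family of σ-algebras `𝒢`: for every `n ≥ 1` and every Borel set `A ⊆ X`,
`E[1_A(d n) | 𝒢 (n-1)] = E[1_A(e n) | 𝒢 (n-1)]` almost surely. -/
def AreTangent {Ω X : Type*} [MeasurableSpace X]
    {mΩ : MeasurableSpace Ω} (μ : Measure Ω) (𝒢 : ℕ → MeasurableSpace Ω)
    (d e : ℕ → Ω → X) : Prop :=
  ∀ n : ℕ, 1 ≤ n → ∀ A : Set X, MeasurableSet A →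
    μ[fun ω => A.indicator (fun _ => (1 : ℝ)) (d n ω) | 𝒢 (n - 1)]
      =ᵐ[μ] μ[fun ω => A.indicator (fun _ => (1 : ℝ)) (e n ω) | 𝒢 (n - 1)]

/-- The filtration `G n = σ(ℱ n ∪ σ(r 1, …, r n))` enlarged by the random signs `r`. -/
def enlargedFiltration {Ω : Type*} {mΩ : MeasurableSpace Ω} (ℱ : Filtration ℕ mΩ)
    (r : ℕ → Ω → ℝ) : ℕ → MeasurableSpace Ω :=
  fun n => (ℱ n : MeasurableSpace Ω) ⊔
    ⨆ k ∈ Finset.Icc 1 n, MeasurableSpace.comap (r k) inferInstance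

/-!
Since `r n = ±1` almost surely, `1_A(r n • d n) = 1_{r n = 1} 1_A(d n) + 1_{r n = -1} 1_{-A}(d n)`
a.e. For `R ∈ σ(r n)` and `f` measurable for `ℱ ∞ = ⨆ k, ℱ k`, one has
`E[1_R f | ℱ (n-1) ⊔ σ(r 1, …, r (n-1))] = P(R) E[f | ℱ (n-1)]`: both sides have integral
`P(S) P(R) ∫_F f` over each set `F ∩ S` of the generating π-system, because the signs are
independent of `ℱ ∞` and `r n` is independent of the earlier signs. With `P(r n = ±1) = 1/2`
this gives the formula, and comparing it for `d` and `e`, or for `A` and `-A`, gives tangency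
and conditional symmetry.
-/

namespace MeasurableSpace

variable {Ω : Type*}

theorem sup_eq_generateFrom_image2_inter (m₁ m₂ : MeasurableSpace Ω) :
    m₁ ⊔ m₂ =
      generateFrom (image2 (· ∩ ·) {s | MeasurableSet[m₁] s} {t | MeasurableSet[m₂] t}) := by
  refine le_antisymm (sup_le ?_ ?_) (generateFrom_le ?_)
  · exact fun s hs => measurableSet_generateFrom ⟨s, hs, univ, .univ, inter_univ s⟩
  · exact fun t ht => measurableSet_generateFrom ⟨univ, .univ, t, ht, univ_inter t⟩
  · rintro _ ⟨s, hs, t, ht, rfl⟩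
    exact (le_sup_left (b := m₂) s hs).inter (le_sup_right (a := m₁) t ht)

theorem isPiSystem_image2_inter (m₁ m₂ : MeasurableSpace Ω) :
    IsPiSystem (image2 (· ∩ ·) {s | MeasurableSet[m₁] s} {t | MeasurableSet[m₂] t}) := by
  rintro _ ⟨s₁, hs₁, t₁, ht₁, rfl⟩ _ ⟨s₂, hs₂, t₂, ht₂, rfl⟩ -
  exact ⟨s₁ ∩ s₂, hs₁.inter hs₂, t₁ ∩ t₂, ht₁.inter ht₂, inter_inter_inter_comm _ _ _ _⟩

end MeasurableSpace

section PiSystem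

variable {α E : Type*} [NormedAddCommGroup E] [NormedSpace ℝ E]
  {m m₀ : MeasurableSpace α} {μ : Measure α} {f g : α → E} {C : Set (Set α)}

theorem setIntegral_eq_of_isPiSystem (hm : m ≤ m₀) (hgen : m = MeasurableSpace.generateFrom C)
    (hC : IsPiSystem C) (huniv : univ ∈ C) (hf : Integrable f μ) (hg : Integrable g μ)
    (h : ∀ s ∈ C, ∫ x in s, f x ∂μ = ∫ x in s, g x ∂μ) {s : Set α} (hs : MeasurableSet[m] s) :
    ∫ x in s, f x ∂μ = ∫ x in s, g x ∂μ := by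
  induction s, hs using MeasurableSpace.induction_on_inter hgen hC with
  | empty => simp
  | basic t ht => exact h t ht
  | compl t ht iht =>
    have h_univ := h univ huniv
    rw [setIntegral_univ, setIntegral_univ] at h_univ
    rw [setIntegral_compl (hm t ht) hf, setIntegral_compl (hm t ht) hg, iht, h_univ]
  | iUnion t hdisj ht iht =>
    rw [integral_iUnion (fun i => hm _ (ht i)) hdisj hf.integrableOn,
      integral_iUnion (fun i => hm _ (ht i)) hdisj hg.integrableOn]
    exact tsum_congr iht

theorem ae_eq_condExp_of_isPiSystem [CompleteSpace E] (hm : m ≤ m₀) [SigmaFinite (μ.trim hm)]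
    (hgen : m = MeasurableSpace.generateFrom C) (hC : IsPiSystem C) (huniv : univ ∈ C)
    (hf : Integrable f μ) (hg : Integrable g μ) (hgm : AEStronglyMeasurable[m] g μ)
    (h : ∀ s ∈ C, ∫ x in s, g x ∂μ = ∫ x in s, f x ∂μ) : g =ᵐ[μ] μ[f | m] :=
  ae_eq_condExp_of_forall_setIntegral_eq hm hf (fun _ _ _ => hg.integrableOn)
    (fun _ hs _ => setIntegral_eq_of_isPiSystem hm hgen hC huniv hg hf h hs) hgm

end PiSystem

namespace ProbabilityTheory

section Independence

variable {Ω E : Type*} [NormedAddCommGroup E] [NormedSpace ℝ E] [CompleteSpace E]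
  {m₁ m₂ m : MeasurableSpace Ω} {μ : Measure Ω} {f : Ω → E}

theorem Indep.measureReal_inter_eq_mul (hindep : Indep m₁ m₂ μ) {s t : Set Ω}
    (hs : MeasurableSet[m₁] s) (ht : MeasurableSet[m₂] t) :
    μ.real (s ∩ t) = μ.real s * μ.real t := by
  rw [measureReal_def, (Indep_iff _ _ μ).1 hindep s t hs ht, ENNReal.toReal_mul,
    measureReal_def, measureReal_def]

theorem Indep.setIntegral_eq_measureReal_smul_integral [IsFiniteMeasure μ]
    (hindep : Indep m₁ m₂ μ) (hle₁ : m₁ ≤ m) (hle₂ : m₂ ≤ m) (hf : StronglyMeasurable[m₁] f)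
    (hfi : Integrable f μ) {s : Set Ω} (hs : MeasurableSet[m₂] s) :
    ∫ x in s, f x ∂μ = μ.real s • ∫ x, f x ∂μ := by
  rw [← setIntegral_condExp hle₂ hfi hs,
    setIntegral_congr_ae (hle₂ s hs) ((condExp_indep_eq hle₁ hle₂ hf hindep).mono fun _ h _ => h),
    setIntegral_const]

theorem condExp_indicator_sup_eq_smul_condExp [IsFiniteMeasure μ]
    {mF mF' mS mR : MeasurableSpace Ω} (hF : mF ≤ mF') (hF' : mF' ≤ m) (hS : mS ≤ m)
    (hR : mR ≤ m) (hSR_F : Indep (mS ⊔ mR) mF' μ) (hSR : Indep mS mR μ)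
    (hf : StronglyMeasurable[mF'] f) (hfi : Integrable f μ) {R : Set Ω}
    (hRm : MeasurableSet[mR] R) :
    μ[R.indicator f | mF ⊔ mS] =ᵐ[μ] fun ω => μ.real R • μ[f | mF] ω := by
  have hSR_le : mS ⊔ mR ≤ m := sup_le hS hR
  refine (ae_eq_condExp_of_isPiSystem (sup_le (hF.trans hF') hS)
    (MeasurableSpace.sup_eq_generateFrom_image2_inter _ _)
    (MeasurableSpace.isPiSystem_image2_inter _ _) ⟨univ, .univ, univ, .univ, univ_inter _⟩
    (hfi.indicator (hR _ hRm)) ((integrable_condExp (m := mF) (f := f)).smul (μ.real R))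
    (((stronglyMeasurable_condExp (m := mF) (f := f) (μ := μ)).const_smul (μ.real R)).mono
      (le_sup_left : mF ≤ mF ⊔ mS)).aestronglyMeasurable ?_).symm
  rintro _ ⟨F, hFm, S, hSm, rfl⟩
  have hS_meas : MeasurableSet[mS ⊔ mR] S := le_sup_left (b := mR) S hSm
  have hSR_meas : MeasurableSet[mS ⊔ mR] (S ∩ R) := hS_meas.inter (le_sup_right (a := mS) R hRm)
  have hF_meas : MeasurableSet[m] F := hF.trans hF' F hFm
  calc ∫ x in F ∩ S, μ.real R • μ[f | mF] x ∂μ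
      = μ.real R • ∫ x in S, F.indicator (μ[f | mF]) x ∂μ := by
        rw [integral_smul, setIntegral_indicator hF_meas, inter_comm S F]
    _ = μ.real R • (μ.real S • ∫ x in F, f x ∂μ) := by
        rw [hSR_F.symm.setIntegral_eq_measureReal_smul_integral hF' hSR_le
          ((stronglyMeasurable_condExp.indicator hFm).mono hF)
          (integrable_condExp.indicator hF_meas) hS_meas, integral_indicator hF_meas,
          setIntegral_condExp (hF.trans hF') hfi hFm]
    _ = μ.real (S ∩ R) • ∫ x in F, f x ∂μ := by
        rw [hSR.measureReal_inter_eq_mul hSm hRm, smul_smul, mul_comm]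
    _ = ∫ x in F ∩ S, R.indicator f x ∂μ := by
        rw [← integral_indicator hF_meas, ← hSR_F.symm.setIntegral_eq_measureReal_smul_integral hF'
          hSR_le (hf.indicator (hF F hFm)) (hfi.indicator hF_meas) hSR_meas,
          setIntegral_indicator hF_meas, setIntegral_indicator (hR R hRm), inter_right_comm S R F,
          inter_comm S F]

end Independence

variable {Ω : Type*} {m : MeasurableSpace Ω} {μ : Measure Ω}

theorem ae_eq_one_or_eq_neg_one [IsProbabilityMeasure μ] {r : Ω → ℝ} (hr : Measurable r)
    (h₁ : μ {ω | r ω = 1} = 1 / 2) (h₂ : μ {ω | r ω = -1} = 1 / 2) :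
    ∀ᵐ ω ∂μ, r ω = 1 ∨ r ω = -1 := by
  have hdisj : Disjoint {ω | r ω = 1} {ω | r ω = -1} :=
    disjoint_left.2 fun ω (h : r ω = 1) (h' : r ω = -1) => by norm_num [h] at h'
  have hunion : μ ({ω | r ω = 1} ∪ {ω | r ω = -1}) = 1 := by
    rw [measure_union hdisj (hr (measurableSet_singleton _)), h₁, h₂, ENNReal.add_halves]
  exact mem_ae_iff.2 ((prob_compl_eq_zero_iff
    ((hr (measurableSet_singleton _)).union (hr (measurableSet_singleton _)))).2 hunion)

theorem iIndepFun.indep_biSup_comap_comap {ι β : Type*} {mβ : MeasurableSpace β}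
    {r : ι → Ω → β} (hr : ∀ i, Measurable (r i)) (h : iIndepFun r μ) {S : Set ι} {j : ι}
    (hj : j ∉ S) :
    Indep (⨆ i ∈ S, mβ.comap (r i)) (mβ.comap (r j)) μ := by
  simpa only [iSup_singleton] using
    indep_iSup_of_disjoint (fun i => (hr i).comap_le) h.iIndep (disjoint_singleton_right.2 hj)

end ProbabilityTheory

theorem indicator_sign_smul_ae_eq {Ω X : Type*} [AddCommGroup X] [Module ℝ X]
    {mΩ : MeasurableSpace Ω} {μ : Measure Ω} {r : Ω → ℝ} (hr : ∀ᵐ ω ∂μ, r ω = 1 ∨ r ω = -1)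
    (d : Ω → X) (A : Set X) :
    (fun ω => A.indicator (fun _ => (1 : ℝ)) (r ω • d ω)) =ᵐ[μ]
      {ω | r ω = 1}.indicator (fun ω => A.indicator (fun _ => 1) (d ω)) +
        {ω | r ω = -1}.indicator (fun ω => (-A).indicator (fun _ => 1) (d ω)) := by
  filter_upwards [hr] with ω h
  classical
  rcases h with h | h <;> norm_num [h, indicator_apply]

theorem condExp_indicator_sign_eq_smul_condExp {Ω E : Type*} [NormedAddCommGroup E]
    [NormedSpace ℝ E] [CompleteSpace E] {mΩ : MeasurableSpace Ω} {μ : Measure Ω}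
    [IsFiniteMeasure μ] (ℱ : Filtration ℕ mΩ) (r : ℕ → Ω → ℝ) (hr_meas : ∀ n, Measurable (r n))
    (hr_indep : iIndepFun r μ)
    (hr_F : Indep (⨆ n, MeasurableSpace.comap (r n) inferInstance)
      (⨆ n, (ℱ n : MeasurableSpace Ω)) μ)
    (n : ℕ) {f : Ω → E} (hf : StronglyMeasurable[ℱ n] f) (hfi : Integrable f μ) {R : Set Ω}
    (hR : MeasurableSet[MeasurableSpace.comap (r n) inferInstance] R) :
    μ[R.indicator f | enlargedFiltration ℱ r (n - 1)] =ᵐ[μ]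
      fun ω => μ.real R • μ[f | ℱ (n - 1)] ω := by
  set past := ⨆ k ∈ Finset.Icc 1 (n - 1), MeasurableSpace.comap (r k) inferInstance
  have h_past_le : past ≤ ⨆ k, MeasurableSpace.comap (r k) inferInstance :=
    iSup₂_le fun k _ => le_iSup (fun k => MeasurableSpace.comap (r k) inferInstance) k
  have h_past_sign : Indep past (MeasurableSpace.comap (r n) inferInstance) μ :=
    hr_indep.indep_biSup_comap_comap hr_meas (S := ↑(Finset.Icc 1 (n - 1)))
      (by simp only [Finset.coe_Icc, mem_Icc]; omega)
  have h_signs_F : Indep (past ⊔ MeasurableSpace.comap (r n) inferInstance)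
      (⨆ k, (ℱ k : MeasurableSpace Ω)) μ :=
    indep_of_indep_of_le_left hr_F
      (sup_le h_past_le (le_iSup (fun k => MeasurableSpace.comap (r k) inferInstance) n))
  exact condExp_indicator_sup_eq_smul_condExp ((ℱ.mono (Nat.sub_le n 1)).trans (le_iSup _ n))
    (iSup_le ℱ.le) (iSup₂_le fun k _ => (hr_meas k).comap_le) (hr_meas n).comap_le h_signs_F
    h_past_sign (hf.mono (le_iSup _ n)) hfi hR

section Randomization

variable {Ω X : Type*} [NormedAddCommGroup X] [NormedSpace ℝ X] [MeasurableSpace X]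
  [BorelSpace X] {mΩ : MeasurableSpace Ω} {μ : Measure Ω} [IsProbabilityMeasure μ]

theorem condExp_indicator_rademacher_smul (ℱ : Filtration ℕ mΩ) (d : ℕ → Ω → X)
    (hd : ∀ n, StronglyMeasurable[ℱ n] (d n)) (r : ℕ → Ω → ℝ) (hr_meas : ∀ n, Measurable (r n))
    (hr_rad : ∀ n, μ {ω | r n ω = 1} = 1 / 2 ∧ μ {ω | r n ω = -1} = 1 / 2)
    (hr_indep : iIndepFun r μ)
    (hr_F : Indep (⨆ n, MeasurableSpace.comap (r n) inferInstance)
      (⨆ n, (ℱ n : MeasurableSpace Ω)) μ)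
    (n : ℕ) {A : Set X} (hA : MeasurableSet A) :
    μ[fun ω => A.indicator (fun _ => (1 : ℝ)) (r n ω • d n ω) | enlargedFiltration ℱ r (n - 1)]
      =ᵐ[μ] fun ω =>
        (1 / 2) * (μ[fun ω' => A.indicator (fun _ => (1 : ℝ)) (d n ω') | ℱ (n - 1)]) ω +
        (1 / 2) * (μ[fun ω' => (-A).indicator (fun _ => (1 : ℝ)) (d n ω') | ℱ (n - 1)]) ω := by
  have h_half : ∀ c : ℝ, μ {ω | r n ω = c} = 1 / 2 → μ.real {ω | r n ω = c} = 1 / 2 :=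
    fun c hc => by rw [measureReal_def, hc, ENNReal.toReal_div]; norm_num
  have h_int : ∀ B : Set X, MeasurableSet B →
      Integrable (fun ω => B.indicator (fun _ => (1 : ℝ)) (d n ω)) μ := fun B hB =>
    (integrable_const (1 : ℝ)).indicator (ℱ.le n _ ((hd n).measurable hB))
  have key : ∀ B : Set X, MeasurableSet B → ∀ c : ℝ,
      μ[{ω | r n ω = c}.indicator (fun ω => B.indicator (fun _ => (1 : ℝ)) (d n ω)) |
        enlargedFiltration ℱ r (n - 1)] =ᵐ[μ]
      fun ω => μ.real {ω | r n ω = c} •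
        μ[fun ω => B.indicator (fun _ => (1 : ℝ)) (d n ω) | ℱ (n - 1)] ω := fun B hB c =>
    condExp_indicator_sign_eq_smul_condExp ℱ r hr_meas hr_indep hr_F n
      ((measurable_const.indicator hB).comp (hd n).measurable).stronglyMeasurable (h_int B hB)
      ⟨{c}, measurableSet_singleton c, rfl⟩
  calc μ[fun ω => A.indicator (fun _ => (1 : ℝ)) (r n ω • d n ω) | enlargedFiltration ℱ r (n - 1)]
      =ᵐ[μ] μ[{ω | r n ω = 1}.indicator (fun ω => A.indicator (fun _ => 1) (d n ω)) +
          {ω | r n ω = -1}.indicator (fun ω => (-A).indicator (fun _ => 1) (d n ω)) |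
          enlargedFiltration ℱ r (n - 1)] :=
        condExp_congr_ae (indicator_sign_smul_ae_eq
          (ae_eq_one_or_eq_neg_one (hr_meas n) (hr_rad n).1 (hr_rad n).2) (d n) A)
    _ =ᵐ[μ] μ[{ω | r n ω = 1}.indicator (fun ω => A.indicator (fun _ => 1) (d n ω)) |
          enlargedFiltration ℱ r (n - 1)] +
        μ[{ω | r n ω = -1}.indicator (fun ω => (-A).indicator (fun _ => 1) (d n ω)) |
          enlargedFiltration ℱ r (n - 1)] :=
        condExp_add ((h_int A hA).indicator (hr_meas n (measurableSet_singleton 1)))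
          ((h_int (-A) hA.neg).indicator (hr_meas n (measurableSet_singleton (-1)))) _
    _ =ᵐ[μ] _ := by
        filter_upwards [key A hA 1, key (-A) hA.neg (-1)] with ω h₁ h₂
        rw [Pi.add_apply, h₁, h₂, h_half 1 (hr_rad n).1, h_half (-1) (hr_rad n).2, smul_eq_mul,
          smul_eq_mul]

theorem condExp_indicator_rademacher_smul_neg (ℱ : Filtration ℕ mΩ) (d : ℕ → Ω → X)
    (hd : ∀ n, StronglyMeasurable[ℱ n] (d n)) (r : ℕ → Ω → ℝ) (hr_meas : ∀ n, Measurable (r n))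
    (hr_rad : ∀ n, μ {ω | r n ω = 1} = 1 / 2 ∧ μ {ω | r n ω = -1} = 1 / 2)
    (hr_indep : iIndepFun r μ)
    (hr_F : Indep (⨆ n, MeasurableSpace.comap (r n) inferInstance)
      (⨆ n, (ℱ n : MeasurableSpace Ω)) μ)
    (n : ℕ) {A : Set X} (hA : MeasurableSet A) :
    μ[fun ω => A.indicator (fun _ => (1 : ℝ)) (r n ω • d n ω) | enlargedFiltration ℱ r (n - 1)]
      =ᵐ[μ] μ[fun ω => (-A).indicator (fun _ => (1 : ℝ)) (r n ω • d n ω) |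
        enlargedFiltration ℱ r (n - 1)] := by
  have h_neg := condExp_indicator_rademacher_smul ℱ d hd r hr_meas hr_rad hr_indep hr_F n hA.neg
  rw [neg_neg] at h_neg
  refine (condExp_indicator_rademacher_smul ℱ d hd r hr_meas hr_rad hr_indep hr_F n hA).trans
    (EventuallyEq.trans ?_ h_neg.symm)
  exact .of_eq (funext fun _ => add_comm _ _)

theorem areTangent_rademacher_smul (ℱ : Filtration ℕ mΩ) (d e : ℕ → Ω → X)
    (hd : ∀ n, StronglyMeasurable[ℱ n] (d n)) (he : ∀ n, StronglyMeasurable[ℱ n] (e n))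
    (r : ℕ → Ω → ℝ) (hr_meas : ∀ n, Measurable (r n))
    (hr_rad : ∀ n, μ {ω | r n ω = 1} = 1 / 2 ∧ μ {ω | r n ω = -1} = 1 / 2)
    (hr_indep : iIndepFun r μ)
    (hr_F : Indep (⨆ n, MeasurableSpace.comap (r n) inferInstance)
      (⨆ n, (ℱ n : MeasurableSpace Ω)) μ)
    (hde : AreTangent μ (fun n => (ℱ n : MeasurableSpace Ω)) d e) :
    AreTangent μ (enlargedFiltration ℱ r)
      (fun n ω => r n ω • d n ω) (fun n ω => r n ω • e n ω) := by
  intro n hn A hA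
  filter_upwards [condExp_indicator_rademacher_smul ℱ d hd r hr_meas hr_rad hr_indep hr_F n hA,
    condExp_indicator_rademacher_smul ℱ e he r hr_meas hr_rad hr_indep hr_F n hA,
    hde n hn A hA, hde n hn (-A) hA.neg] with ω hd_eq he_eq h_pos h_neg
  rw [hd_eq, he_eq, h_pos, h_neg]

end Randomization

theorem rademacher_randomization_tangent_general
    {Ω X : Type*} [NormedAddCommGroup X] [NormedSpace ℝ X]
    [MeasurableSpace X] [BorelSpace X]
    {mΩ : MeasurableSpace Ω} (μ : Measure Ω) [IsProbabilityMeasure μ]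
    (ℱ : Filtration ℕ mΩ) (d e : ℕ → Ω → X)
    (hd : ∀ n, StronglyMeasurable[ℱ n] (d n)) (he : ∀ n, StronglyMeasurable[ℱ n] (e n))
    (r : ℕ → Ω → ℝ) (hr_meas : ∀ n, Measurable (r n))
    (hr_rad : ∀ n, μ {ω | r n ω = 1} = 1 / 2 ∧ μ {ω | r n ω = -1} = 1 / 2)
    (hr_indep : iIndepFun r μ)
    (hr_F : Indep (⨆ n, MeasurableSpace.comap (r n) inferInstance)
      (⨆ n, (ℱ n : MeasurableSpace Ω)) μ) :
    (∀ n : ℕ, 1 ≤ n → ∀ A : Set X, MeasurableSet A →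
      μ[fun ω => A.indicator (fun _ => (1 : ℝ)) (r n ω • d n ω) | enlargedFiltration ℱ r (n - 1)]
        =ᵐ[μ] fun ω =>
          (1 / 2) * (μ[fun ω' => A.indicator (fun _ => (1 : ℝ)) (d n ω') | ℱ (n - 1)]) ω +
          (1 / 2) * (μ[fun ω' => (-A).indicator (fun _ => (1 : ℝ)) (d n ω') | ℱ (n - 1)]) ω) ∧
    (AreTangent μ (fun n => (ℱ n : MeasurableSpace Ω)) d e →
      AreTangent μ (enlargedFiltration ℱ r)
          (fun n ω => r n ω • d n ω) (fun n ω => r n ω • e n ω) ∧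
      (∀ n : ℕ, 1 ≤ n → ∀ A : Set X, MeasurableSet A →
        μ[fun ω => A.indicator (fun _ => (1 : ℝ)) (r n ω • d n ω) |
            enlargedFiltration ℱ r (n - 1)]
          =ᵐ[μ] μ[fun ω => (-A).indicator (fun _ => (1 : ℝ)) (r n ω • d n ω) |
            enlargedFiltration ℱ r (n - 1)]) ∧
      (∀ n : ℕ, 1 ≤ n → ∀ A : Set X, MeasurableSet A →
        μ[fun ω => A.indicator (fun _ => (1 : ℝ)) (r n ω • e n ω) |
            enlargedFiltration ℱ r (n - 1)]
          =ᵐ[μ] μ[fun ω => (-A).indicator (fun _ => (1 : ℝ)) (r n ω • e n ω) |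
            enlargedFiltration ℱ r (n - 1)])) := by
  refine ⟨fun n _ _ hA =>
      condExp_indicator_rademacher_smul ℱ d hd r hr_meas hr_rad hr_indep hr_F n hA,
    fun hde => ⟨areTangent_rademacher_smul ℱ d e hd he r hr_meas hr_rad hr_indep hr_F hde,
      fun n _ _ hA =>
        condExp_indicator_rademacher_smul_neg ℱ d hd r hr_meas hr_rad hr_indep hr_F n hA,
      fun n _ _ hA =>
        condExp_indicator_rademacher_smul_neg ℱ e he r hr_meas hr_rad hr_indep hr_F n hA⟩⟩

/-- Randomization by independent Rademacher variables: the conditional law of `r n • d n` given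
`G (n-1)` is the symmetrization of that of `d n`; consequently tangency is preserved and the
randomized sequences are conditionally symmetric. -/
theorem rademacher_randomization_tangent
    {Ω X : Type*} [NormedAddCommGroup X] [NormedSpace ℝ X] [CompleteSpace X]
    [TopologicalSpace.SeparableSpace X] [MeasurableSpace X] [BorelSpace X]
    {mΩ : MeasurableSpace Ω} (μ : Measure Ω) [IsProbabilityMeasure μ]
    (ℱ : Filtration ℕ mΩ) (d e : ℕ → Ω → X)
    (hd : ∀ n, StronglyMeasurable[ℱ n] (d n)) (he : ∀ n, StronglyMeasurable[ℱ n] (e n))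
    (r : ℕ → Ω → ℝ) (hr_meas : ∀ n, Measurable (r n))
    (hr_rad : ∀ n, μ {ω | r n ω = 1} = 1 / 2 ∧ μ {ω | r n ω = -1} = 1 / 2)
    (hr_indep : iIndepFun r μ)
    (hr_F : Indep (⨆ n, MeasurableSpace.comap (r n) inferInstance)
      (⨆ n, (ℱ n : MeasurableSpace Ω)) μ) :
    (∀ n : ℕ, 1 ≤ n → ∀ A : Set X, MeasurableSet A →
      μ[fun ω => A.indicator (fun _ => (1 : ℝ)) (r n ω • d n ω) | enlargedFiltration ℱ r (n - 1)]
        =ᵐ[μ] fun ω =>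
          (1 / 2) * (μ[fun ω' => A.indicator (fun _ => (1 : ℝ)) (d n ω') | ℱ (n - 1)]) ω +
          (1 / 2) * (μ[fun ω' => (-A).indicator (fun _ => (1 : ℝ)) (d n ω') | ℱ (n - 1)]) ω) ∧
    (AreTangent μ (fun n => (ℱ n : MeasurableSpace Ω)) d e →
      AreTangent μ (enlargedFiltration ℱ r)
          (fun n ω => r n ω • d n ω) (fun n ω => r n ω • e n ω) ∧
      (∀ n : ℕ, 1 ≤ n → ∀ A : Set X, MeasurableSet A →
        μ[fun ω => A.indicator (fun _ => (1 : ℝ)) (r n ω • d n ω) |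
            enlargedFiltration ℱ r (n - 1)]
          =ᵐ[μ] μ[fun ω => (-A).indicator (fun _ => (1 : ℝ)) (r n ω • d n ω) |
            enlargedFiltration ℱ r (n - 1)]) ∧
      (∀ n : ℕ, 1 ≤ n → ∀ A : Set X, MeasurableSet A →
        μ[fun ω => A.indicator (fun _ => (1 : ℝ)) (r n ω • e n ω) |
            enlargedFiltration ℱ r (n - 1)]
          =ᵐ[μ] μ[fun ω => (-A).indicator (fun _ => (1 : ℝ)) (r n ω • e n ω) |
            enlargedFiltration ℱ r (n - 1)])) :=
  rademacher_randomization_tangent_general μ ℱ d e hd he r hr_meas hr_rad hr_indep hr_F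
end

section
/- Let (Ω,F,P) be a probability space and f, g : Ω → [0,∞) be measurable. Suppose there exist β > 1, δ > 0, and ε > 0 such that P(g > βλ, f ≤ δλ) ≤ ε P(g > λ) for all λ > 0. Let φ : [0,∞) → [0,∞) be a convex function of moderate growth with φ(0) = 0, and let γ < ε^{-1} and η be constants such that φ(βλ) ≤ γ φ(λ) and φ(δ^{-1}λ) ≤ η φ(λ) for all λ > 0, with γε < 1. Then E φ(g) ≤ (γη/(1−γε)) · E φ(f). -/
/-!
Burkholder's good-λ argument. Put `A = E φ(g)`, `B = E φ(g/β)`, `D = E φ(f/δ)`. The growth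
conditions on `φ` give `A ≤ γ B` and `D ≤ η E φ(f)` pointwise. The good-λ hypothesis gives
`P(g/β > λ) ≤ ε P(g > λ) + P(f/δ > λ)` for `λ > 0`; as `φ` is continuous and nondecreasing on
`[0, ∞)` with `φ 0 = 0`, each superlevel set `{x ≥ 0 | φ x > t}` (`t > 0`) is empty or a half-line
`(a, ∞)` with `a > 0`, so the same tail inequality holds after composing with `φ`, and the
layer-cake formula turns it into `B ≤ ε A + D`. Thus `A ≤ γε A + γη E φ(f)`, which can be solved
for `A` when `A < ∞`. Finiteness is arranged by truncating `g` at level `n`, which preserves the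
good-λ hypothesis because `β ≥ 1`, and then letting `n → ∞` by monotone convergence.
-/

open MeasureTheory Filter Set
open scoped ENNReal Topology

namespace ConvexOn

variable {φ : ℝ → ℝ}

lemma monotoneOn_Ici_of_isMinOn (hφ : ConvexOn ℝ (Ici 0) φ) (hmin : IsMinOn φ (Ici 0) 0) :
    MonotoneOn φ (Ici 0) := by
  intro s hs t ht hst
  rcases (mem_Ici.1 hs).eq_or_lt with rfl | hs_pos
  · exact hmin ht
  · exact hφ.le_right_of_left_le'' self_mem_Ici ht hs_pos hst (hmin hs)

lemma map_mul_le_mul_of_map_zero (hφ : ConvexOn ℝ (Ici 0) φ) (hφ0 : φ 0 = 0) {a x : ℝ}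
    (ha0 : 0 ≤ a) (ha1 : a ≤ 1) (hx : 0 ≤ x) : φ (a * x) ≤ a * φ x := by
  simpa [hφ0, smul_eq_mul] using
    hφ.2 (self_mem_Ici : (0 : ℝ) ∈ Ici 0) (mem_Ici.2 hx) (sub_nonneg.2 ha1) ha0 (by ring)

lemma continuousOn_Ici_of_map_zero (hφ : ConvexOn ℝ (Ici 0) φ) (hφ0 : φ 0 = 0)
    (hφnonneg : ∀ t, 0 ≤ t → 0 ≤ φ t) : ContinuousOn φ (Ici 0) := by
  refine hφ.continuousOn_Ici ?_
  have hupper : Tendsto (fun x => x * φ 1) (𝓝[Ici 0] 0) (𝓝 0) := by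
    simpa using ((continuous_mul_const (φ 1)).tendsto 0).mono_left nhdsWithin_le_nhds
  rw [ContinuousWithinAt, hφ0]
  refine tendsto_of_tendsto_of_tendsto_of_le_of_le' tendsto_const_nhds hupper ?_ ?_
  · filter_upwards [self_mem_nhdsWithin] with x hx using hφnonneg x hx
  · filter_upwards [self_mem_nhdsWithin, nhdsWithin_le_nhds (Iic_mem_nhds one_pos)]
      with x hx0 hx1
    simpa using hφ.map_mul_le_mul_of_map_zero hφ0 hx0 hx1 zero_le_one

end ConvexOn

lemma ENNReal.le_ofReal_div_mul_of_le_mul_add {A F : ℝ≥0∞} {a b : ℝ} (hA : A ≠ ∞)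
    (ha0 : 0 ≤ a) (ha1 : a < 1) (h : A ≤ ENNReal.ofReal a * A + ENNReal.ofReal b * F) :
    A ≤ ENNReal.ofReal (b / (1 - a)) * F := by
  have hpos : 0 < 1 - a := sub_pos.2 ha1
  have hsolved : ENNReal.ofReal (1 - a) * A ≤ ENNReal.ofReal b * F := by
    rw [ENNReal.ofReal_sub _ ha0, ENNReal.ofReal_one, ENNReal.sub_mul fun _ _ => hA, one_mul]
    exact tsub_le_iff_left.2 h
  rw [ENNReal.ofReal_div_of_pos hpos, ← ENNReal.mul_div_right_comm,
    ENNReal.le_div_iff_mul_le (Or.inl (ENNReal.ofReal_pos.2 hpos).ne')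
      (Or.inl ENNReal.ofReal_ne_top), mul_comm]
  exact hsolved

lemma MonotoneOn.exists_lt_iff_lt_of_continuousOn {ψ : ℝ → ℝ} (hmono : MonotoneOn ψ (Ici 0))
    (hcont : ContinuousOn ψ (Ici 0)) {t : ℝ} (ht : ψ 0 < t) (hbdd : ∃ x, 0 ≤ x ∧ t < ψ x) :
    ∃ a, 0 < a ∧ ∀ x, 0 ≤ x → (t < ψ x ↔ a < x) := by
  obtain ⟨x₀, hx₀, htx₀⟩ := hbdd
  set s := Ici 0 ∩ ψ ⁻¹' Iic t
  have hs_bdd : BddAbove s := ⟨x₀, fun x hx => le_of_not_gt fun hlt =>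
    htx₀.not_ge ((hmono hx₀ hx.1 hlt.le).trans hx.2)⟩
  have ha : sSup s ∈ s :=
    (hcont.preimage_isClosed_of_isClosed isClosed_Ici isClosed_Iic).csSup_mem
      ⟨0, self_mem_Ici, ht.le⟩ hs_bdd
  obtain ⟨x, hx_pos, hx⟩ : ∃ x, 0 < x ∧ ψ x < t :=
    (((hcont 0 self_mem_Ici).eventually (gt_mem_nhds ht)).filter_mono
      (nhdsWithin_mono _ Ioi_subset_Ici_self) |>.and self_mem_nhdsWithin).exists.imp
      fun _ h => ⟨h.2, h.1⟩
  refine ⟨sSup s, hx_pos.trans_le (le_csSup hs_bdd ⟨hx_pos.le, hx.le⟩), fun y hy => ⟨?_, ?_⟩⟩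
  · intro hty
    by_contra! hya
    exact hty.not_ge ((hmono hy ha.1 hya).trans ha.2)
  · intro hay
    by_contra! hyt
    exact notMem_of_csSup_lt hay hs_bdd ⟨hy, hyt⟩

lemma ContinuousOn.measurable_comp_of_nonneg {Ω : Type*} [MeasurableSpace Ω] {ψ : ℝ → ℝ}
    (hψ : ContinuousOn ψ (Ici 0)) {X : Ω → ℝ} (hX : Measurable X) (hX0 : ∀ ω, 0 ≤ X ω) :
    Measurable fun ω => ψ (X ω) := by
  have hext : Continuous fun x => ψ (max x 0) :=
    hψ.comp_continuous (continuous_id.max continuous_const) fun x => le_max_right x 0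
  convert hext.measurable.comp hX using 1
  ext ω
  simp [max_eq_left (hX0 ω)]

section LevelSets

variable {Ω : Type*} [MeasurableSpace Ω] (μ : Measure Ω) {X Y Z : Ω → ℝ} {c : ℝ≥0∞}
  {ψ : ℝ → ℝ}

lemma measure_lt_comp_le_of_forall_measure_lt_le
    (hX : ∀ ω, 0 ≤ X ω) (hY : ∀ ω, 0 ≤ Y ω) (hZ : ∀ ω, 0 ≤ Z ω)
    (h : ∀ lam, 0 < lam → μ {ω | lam < X ω} ≤ c * μ {ω | lam < Y ω} + μ {ω | lam < Z ω})
    (hmono : MonotoneOn ψ (Ici 0)) (hcont : ContinuousOn ψ (Ici 0)) (hψ0 : ψ 0 = 0)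
    {t : ℝ} (ht : 0 < t) :
    μ {ω | t < ψ (X ω)} ≤ c * μ {ω | t < ψ (Y ω)} + μ {ω | t < ψ (Z ω)} := by
  by_cases hbdd : ∃ x, 0 ≤ x ∧ t < ψ x
  · obtain ⟨a, ha, hiff⟩ := hmono.exists_lt_iff_lt_of_continuousOn hcont (by rwa [hψ0]) hbdd
    have hlevel : ∀ W : Ω → ℝ, (∀ ω, 0 ≤ W ω) → {ω | t < ψ (W ω)} = {ω | a < W ω} :=
      fun W hW => Set.ext fun ω => hiff _ (hW ω)
    rw [hlevel X hX, hlevel Y hY, hlevel Z hZ]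
    exact h a ha
  · push Not at hbdd
    have hempty : {ω | t < ψ (X ω)} = ∅ :=
      eq_empty_of_forall_notMem fun ω hω => (hbdd _ (hX ω)).not_gt hω
    simp [hempty]

lemma lintegral_ofReal_comp_le_of_forall_measure_lt_le
    (hXm : Measurable X) (hYm : Measurable Y) (hZm : Measurable Z)
    (hX : ∀ ω, 0 ≤ X ω) (hY : ∀ ω, 0 ≤ Y ω) (hZ : ∀ ω, 0 ≤ Z ω)
    (h : ∀ lam, 0 < lam → μ {ω | lam < X ω} ≤ c * μ {ω | lam < Y ω} + μ {ω | lam < Z ω})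
    (hmono : MonotoneOn ψ (Ici 0)) (hcont : ContinuousOn ψ (Ici 0)) (hψ0 : ψ 0 = 0)
    (hψnonneg : ∀ x, 0 ≤ x → 0 ≤ ψ x) :
    ∫⁻ ω, ENNReal.ofReal (ψ (X ω)) ∂μ
      ≤ c * ∫⁻ ω, ENNReal.ofReal (ψ (Y ω)) ∂μ + ∫⁻ ω, ENNReal.ofReal (ψ (Z ω)) ∂μ := by
  have hlayer : ∀ W : Ω → ℝ, Measurable W → (∀ ω, 0 ≤ W ω) →
      ∫⁻ ω, ENNReal.ofReal (ψ (W ω)) ∂μ = ∫⁻ t in Ioi 0, μ {ω | t < ψ (W ω)} :=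
    fun W hWm hW => lintegral_eq_lintegral_meas_lt μ
      (Eventually.of_forall fun ω => hψnonneg _ (hW ω))
      (hcont.measurable_comp_of_nonneg hWm hW).aemeasurable
  have hanti : ∀ W : Ω → ℝ, Measurable fun t => μ {ω | t < ψ (W ω)} :=
    fun W => Antitone.measurable fun s t hst => measure_mono fun ω hω => hst.trans_lt hω
  rw [hlayer X hXm hX, hlayer Y hYm hY, hlayer Z hZm hZ, ← lintegral_const_mul _ (hanti Y),
    ← lintegral_add_left ((hanti Y).const_mul c)]
  exact setLIntegral_mono' measurableSet_Ioi fun t ht =>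
    measure_lt_comp_le_of_forall_measure_lt_le μ hX hY hZ h hmono hcont hψ0 ht

end LevelSets

lemma map_mul_le_mul_of_forall_pos {φ : ℝ → ℝ} {a κ : ℝ} (hφ0 : φ 0 = 0)
    (h : ∀ lam, 0 < lam → φ (a * lam) ≤ κ * φ lam) {x : ℝ} (hx : 0 ≤ x) :
    φ (a * x) ≤ κ * φ x := by
  rcases hx.eq_or_lt with rfl | hx
  · simp [hφ0]
  · exact h x hx

lemma lintegral_ofReal_le_ofReal_mul {Ω : Type*} [MeasurableSpace Ω] (μ : Measure Ω)
    {u v : Ω → ℝ} {κ : ℝ} (hv : ∀ ω, 0 ≤ v ω) (h : ∀ ω, u ω ≤ κ * v ω) :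
    ∫⁻ ω, ENNReal.ofReal (u ω) ∂μ ≤ ENNReal.ofReal κ * ∫⁻ ω, ENNReal.ofReal (v ω) ∂μ := by
  rw [← lintegral_const_mul' _ _ ENNReal.ofReal_ne_top]
  exact lintegral_mono fun ω =>
    (ENNReal.ofReal_le_ofReal (h ω)).trans_eq (ENNReal.ofReal_mul' (hv ω))

section GoodLambda

variable {Ω : Type*} [MeasurableSpace Ω]

def GoodLambda (μ : Measure Ω) (f g : Ω → ℝ) (β δ : ℝ) (c : ℝ≥0∞) : Prop :=
  ∀ lam : ℝ, 0 < lam → μ {ω | β * lam < g ω ∧ f ω ≤ δ * lam} ≤ c * μ {ω | lam < g ω}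

variable {μ : Measure Ω} {f g : Ω → ℝ} {β δ : ℝ} {c : ℝ≥0∞}

lemma GoodLambda.measure_lt_inv_mul_le (hgood : GoodLambda μ f g β δ c) (hβ : 0 < β) (hδ : 0 < δ)
    {lam : ℝ} (hlam : 0 < lam) :
    μ {ω | lam < β⁻¹ * g ω} ≤ c * μ {ω | lam < g ω} + μ {ω | lam < δ⁻¹ * f ω} :=
  calc μ {ω | lam < β⁻¹ * g ω}
      ≤ μ ({ω | β * lam < g ω ∧ f ω ≤ δ * lam} ∪ {ω | lam < δ⁻¹ * f ω}) := by
        refine measure_mono fun ω hω => ?_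
        simp only [mem_union, lt_inv_mul_iff₀ hβ, lt_inv_mul_iff₀ hδ] at hω ⊢
        exact (le_or_gt (f ω) (δ * lam)).imp (fun hf => ⟨hω, hf⟩) id
    _ ≤ c * μ {ω | lam < g ω} + μ {ω | lam < δ⁻¹ * f ω} :=
        (measure_union_le _ _).trans (add_le_add_left (hgood lam hlam) _)

lemma GoodLambda.min_const (hgood : GoodLambda μ f g β δ c) (hβ : 1 ≤ β) (n : ℝ) :
    GoodLambda μ f (fun ω => min (g ω) n) β δ c := by
  intro lam hlam
  by_cases hn : β * lam < n
  · calc μ {ω | β * lam < min (g ω) n ∧ f ω ≤ δ * lam}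
        ≤ μ {ω | β * lam < g ω ∧ f ω ≤ δ * lam} :=
          measure_mono fun ω hω => ⟨(lt_min_iff.1 hω.1).1, hω.2⟩
      _ ≤ c * μ {ω | lam < g ω} := hgood lam hlam
      _ ≤ c * μ {ω | lam < min (g ω) n} := by
          gcongr c * μ ?_
          intro ω hω
          exact lt_min hω ((le_mul_of_one_le_left hlam.le hβ).trans_lt hn)
  · have hempty : {ω | β * lam < min (g ω) n ∧ f ω ≤ δ * lam} = ∅ :=
      eq_empty_of_forall_notMem fun ω hω => hn (hω.1.trans_le (min_le_right _ _))
    rw [hempty, measure_empty]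
    exact zero_le

end GoodLambda

section Truncation

variable {Ω : Type*} [MeasurableSpace Ω] (μ : Measure Ω) {ψ : ℝ → ℝ} {X : Ω → ℝ}

lemma lintegral_ofReal_comp_eq_iSup_min (hmono : MonotoneOn ψ (Ici 0))
    (hcont : ContinuousOn ψ (Ici 0)) (hXm : Measurable X) (hX : ∀ ω, 0 ≤ X ω) :
    ∫⁻ ω, ENNReal.ofReal (ψ (X ω)) ∂μ = ⨆ n : ℕ, ∫⁻ ω, ENNReal.ofReal (ψ (min (X ω) n)) ∂μ := by
  have hmin : ∀ (n : ℕ) ω, 0 ≤ min (X ω) n := fun n ω => le_min (hX ω) n.cast_nonneg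
  rw [← lintegral_iSup
    (fun n => (hcont.measurable_comp_of_nonneg (hXm.min measurable_const) (hmin n)).ennreal_ofReal)
    fun m n hmn ω => ENNReal.ofReal_le_ofReal
      (hmono (hmin m ω) (hmin n ω) (min_le_min_left _ (Nat.cast_le.2 hmn)))]
  refine lintegral_congr fun ω => le_antisymm ?_
    (iSup_le fun n => ENNReal.ofReal_le_ofReal (hmono (hmin n ω) (hX ω) (min_le_left _ _)))
  obtain ⟨n, hn⟩ := exists_nat_ge (X ω)
  exact le_iSup_of_le n (by rw [min_eq_left hn])

lemma lintegral_ofReal_comp_min_ne_top [IsFiniteMeasure μ] (hmono : MonotoneOn ψ (Ici 0))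
    (hX : ∀ ω, 0 ≤ X ω) {n : ℝ} (hn : 0 ≤ n) :
    ∫⁻ ω, ENNReal.ofReal (ψ (min (X ω) n)) ∂μ ≠ ∞ :=
  (IsFiniteMeasure.lintegral_lt_top_of_bounded_to_ennreal μ ⟨(ψ n).toNNReal, fun ω =>
    ENNReal.ofReal_le_ofReal (hmono (le_min (hX ω) hn) hn (min_le_right _ _))⟩).ne

end Truncation

lemma lintegral_le_of_good_lambda_of_ne_top {Ω : Type*} [MeasurableSpace Ω] (μ : Measure Ω)
    {f g : Ω → ℝ} (hf : Measurable f) (hg : Measurable g)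
    (hf0 : ∀ ω, 0 ≤ f ω) (hg0 : ∀ ω, 0 ≤ g ω)
    {β δ ε : ℝ} (hβ : 0 < β) (hδ : 0 < δ) (hε : 0 ≤ ε)
    (hgood : GoodLambda μ f g β δ (ENNReal.ofReal ε))
    {φ : ℝ → ℝ} (hmono : MonotoneOn φ (Ici 0)) (hcont : ContinuousOn φ (Ici 0))
    (hφ0 : φ 0 = 0) (hφnonneg : ∀ t : ℝ, 0 ≤ t → 0 ≤ φ t)
    {γ η : ℝ} (hγ : ∀ lam : ℝ, 0 < lam → φ (β * lam) ≤ γ * φ lam)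
    (hη : ∀ lam : ℝ, 0 < lam → φ (δ⁻¹ * lam) ≤ η * φ lam) (hγε : γ * ε < 1)
    (hfin : ∫⁻ ω, ENNReal.ofReal (φ (g ω)) ∂μ ≠ ∞) :
    ∫⁻ ω, ENNReal.ofReal (φ (g ω)) ∂μ
      ≤ ENNReal.ofReal (γ * η / (1 - γ * ε)) * ∫⁻ ω, ENNReal.ofReal (φ (f ω)) ∂μ := by
  have hg' : ∀ ω, 0 ≤ β⁻¹ * g ω := fun ω => mul_nonneg (inv_nonneg.2 hβ.le) (hg0 ω)
  have hf' : ∀ ω, 0 ≤ δ⁻¹ * f ω := fun ω => mul_nonneg (inv_nonneg.2 hδ.le) (hf0 ω)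
  have hA : ∫⁻ ω, ENNReal.ofReal (φ (g ω)) ∂μ
      ≤ ENNReal.ofReal γ * ∫⁻ ω, ENNReal.ofReal (φ (β⁻¹ * g ω)) ∂μ :=
    lintegral_ofReal_le_ofReal_mul μ (fun ω => hφnonneg _ (hg' ω)) fun ω => by
      simpa [mul_inv_cancel_left₀ hβ.ne'] using map_mul_le_mul_of_forall_pos hφ0 hγ (hg' ω)
  have hB : ∫⁻ ω, ENNReal.ofReal (φ (β⁻¹ * g ω)) ∂μ
      ≤ ENNReal.ofReal ε * ∫⁻ ω, ENNReal.ofReal (φ (g ω)) ∂μ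
        + ∫⁻ ω, ENNReal.ofReal (φ (δ⁻¹ * f ω)) ∂μ :=
    lintegral_ofReal_comp_le_of_forall_measure_lt_le μ (hg.const_mul _) hg (hf.const_mul _)
      hg' hg0 hf'
      (fun _ hlam => hgood.measure_lt_inv_mul_le hβ hδ hlam) hmono hcont hφ0 hφnonneg
  have hD : ∫⁻ ω, ENNReal.ofReal (φ (δ⁻¹ * f ω)) ∂μ
      ≤ ENNReal.ofReal η * ∫⁻ ω, ENNReal.ofReal (φ (f ω)) ∂μ :=
    lintegral_ofReal_le_ofReal_mul μ (fun ω => hφnonneg _ (hf0 ω))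
      fun ω => map_mul_le_mul_of_forall_pos hφ0 hη (hf0 ω)
  rcases le_or_gt γ 0 with hγ0 | hγ0
  · calc ∫⁻ ω, ENNReal.ofReal (φ (g ω)) ∂μ ≤ 0 := by simpa [ENNReal.ofReal_of_nonpos hγ0] using hA
      _ ≤ _ := zero_le
  refine ENNReal.le_ofReal_div_mul_of_le_mul_add hfin (mul_nonneg hγ0.le hε) hγε ?_
  calc ∫⁻ ω, ENNReal.ofReal (φ (g ω)) ∂μ
      ≤ ENNReal.ofReal γ * ∫⁻ ω, ENNReal.ofReal (φ (β⁻¹ * g ω)) ∂μ := hA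
    _ ≤ ENNReal.ofReal γ * (ENNReal.ofReal ε * ∫⁻ ω, ENNReal.ofReal (φ (g ω)) ∂μ
          + ENNReal.ofReal η * ∫⁻ ω, ENNReal.ofReal (φ (f ω)) ∂μ) := by
        gcongr
        exact hB.trans (by gcongr)
    _ = ENNReal.ofReal (γ * ε) * ∫⁻ ω, ENNReal.ofReal (φ (g ω)) ∂μ
          + ENNReal.ofReal (γ * η) * ∫⁻ ω, ENNReal.ofReal (φ (f ω)) ∂μ := by
        rw [mul_add, ← mul_assoc, ← mul_assoc, ← ENNReal.ofReal_mul hγ0.le,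
          ← ENNReal.ofReal_mul hγ0.le]

theorem good_lambda_phi_estimate_general
    {Ω : Type*} {mΩ : MeasurableSpace Ω} (μ : Measure Ω) [IsProbabilityMeasure μ]
    (f g : Ω → ℝ) (hf : Measurable f) (hg : Measurable g)
    (hf0 : ∀ ω, 0 ≤ f ω) (hg0 : ∀ ω, 0 ≤ g ω)
    (β δ ε : ℝ) (hβ : 1 < β) (hδ : 0 < δ) (hε : 0 < ε)
    (hgood : ∀ lam : ℝ, 0 < lam →
      μ {ω | β * lam < g ω ∧ f ω ≤ δ * lam} ≤ ENNReal.ofReal ε * μ {ω | lam < g ω})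
    (φ : ℝ → ℝ) (hconv : ConvexOn ℝ (Set.Ici (0 : ℝ)) φ) (hφ0 : φ 0 = 0)
    (hφnonneg : ∀ t : ℝ, 0 ≤ t → 0 ≤ φ t)
    (γ η : ℝ) (hγ : ∀ lam : ℝ, 0 < lam → φ (β * lam) ≤ γ * φ lam)
    (hη : ∀ lam : ℝ, 0 < lam → φ (δ⁻¹ * lam) ≤ η * φ lam)
    (hγε : γ * ε < 1) :
    ∫⁻ ω, ENNReal.ofReal (φ (g ω)) ∂μ
      ≤ ENNReal.ofReal (γ * η / (1 - γ * ε)) * ∫⁻ ω, ENNReal.ofReal (φ (f ω)) ∂μ := by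
  have hmono : MonotoneOn φ (Ici 0) :=
    hconv.monotoneOn_Ici_of_isMinOn fun t ht => by simpa [hφ0] using hφnonneg t ht
  have hcont : ContinuousOn φ (Ici 0) := hconv.continuousOn_Ici_of_map_zero hφ0 hφnonneg
  rw [lintegral_ofReal_comp_eq_iSup_min μ hmono hcont hg hg0]
  refine iSup_le fun n => ?_
  exact lintegral_le_of_good_lambda_of_ne_top μ hf (hg.min measurable_const) hf0
    (fun ω => le_min (hg0 ω) n.cast_nonneg) (zero_lt_one.trans hβ) hδ hε.le
    (GoodLambda.min_const hgood hβ.le n) hmono hcont hφ0 hφnonneg hγ hη hγε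
    (lintegral_ofReal_comp_min_ne_top μ hmono hg0 n.cast_nonneg)

/-- **Burkholder's good-λ lemma.** If `P(g > βλ, f ≤ δλ) ≤ ε P(g > λ)` for all `λ > 0`, and
`φ` is a convex function of moderate growth with `φ(0) = 0` satisfying `φ(βλ) ≤ γ φ(λ)` and
`φ(δ⁻¹λ) ≤ η φ(λ)` with `γε < 1`, then `E φ(g) ≤ (γη/(1-γε)) E φ(f)` (in `[0,∞]`). -/
theorem good_lambda_phi_estimate
    {Ω : Type*} {mΩ : MeasurableSpace Ω} (μ : Measure Ω) [IsProbabilityMeasure μ]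
    (f g : Ω → ℝ) (hf : Measurable f) (hg : Measurable g)
    (hf0 : ∀ ω, 0 ≤ f ω) (hg0 : ∀ ω, 0 ≤ g ω)
    (β δ ε : ℝ) (hβ : 1 < β) (hδ : 0 < δ) (hε : 0 < ε)
    (hgood : ∀ lam : ℝ, 0 < lam →
      μ {ω | β * lam < g ω ∧ f ω ≤ δ * lam} ≤ ENNReal.ofReal ε * μ {ω | lam < g ω})
    (φ : ℝ → ℝ) (hconv : ConvexOn ℝ (Set.Ici (0 : ℝ)) φ) (hφ0 : φ 0 = 0)
    (hφnonneg : ∀ t : ℝ, 0 ≤ t → 0 ≤ φ t)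
    (hmod : ∃ α : ℝ, 0 < α ∧ ∀ t : ℝ, 0 ≤ t → φ (2 * t) ≤ α * φ t)
    (γ η : ℝ) (hγ : ∀ lam : ℝ, 0 < lam → φ (β * lam) ≤ γ * φ lam)
    (hη : ∀ lam : ℝ, 0 < lam → φ (δ⁻¹ * lam) ≤ η * φ lam)
    (hγε : γ * ε < 1) :
    ∫⁻ ω, ENNReal.ofReal (φ (g ω)) ∂μ
      ≤ ENNReal.ofReal (γ * η / (1 - γ * ε)) * ∫⁻ ω, ENNReal.ofReal (φ (f ω)) ∂μ :=
  good_lambda_phi_estimate_general (mΩ := mΩ) μ f g hf hg hf0 hg0 β δ ε hβ hδ hε hgood φ hconv hφ0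
    hφnonneg γ η hγ hη hγε
end

section
/- Let X be a separable Banach space, let (x_n)_{n≥1} be a dense sequence in X, and let (x_n^*)_{n≥1} ⊆ X^* be a norming sequence for it, i.e., ‖x_n^*‖ = 1 and ⟨x_n, x_n^*⟩ = ‖x_n‖ for every n. Let M : [0,∞) × Ω → X be a stochastic process on a probability space (Ω,F,P) all of whose paths are càdlàg. Then almost every path t ↦ M_t(ω) is continuous on [0,∞) if and only if for every n ≥ 1 almost every path t ↦ ⟨M_t(ω), x_n^*⟩ is continuous on [0,∞). -/
open MeasureTheory ProbabilityTheory Filter Set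
open scoped ENNReal NNReal Topology

/-!
If `‖x' n‖ ≤ 1` and `x' n (x n) = ‖x n‖` for a dense sequence `(x n)`, the functionals `x' n`
separate the points of `X`, so `y ↦ (x' n y)ₙ` is a continuous injection into `ℕ → ℝ`. At a time
`t`, the left limit `L` of a càdlàg path and its value there therefore agree as soon as all
coordinates `x' n` of the path are continuous, and a càdlàg path without jumps is continuous.
-/

section Norming

variable {X : Type*} [NormedAddCommGroup X] [NormedSpace ℝ X]

/-- If `x' n y = 0` for all `n`, then `‖x n‖ = x' n (x n - y) ≤ ‖x n - y‖`, hence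
`‖y‖ ≤ 2 ‖x n - y‖`, which is arbitrarily small. -/
theorem eq_zero_of_forall_norming_apply_eq_zero {x : ℕ → X} (hx : DenseRange x)
    {x' : ℕ → X →L[ℝ] ℝ} (hnorm : ∀ n, ‖x' n‖ ≤ 1) (hnorming : ∀ n, x' n (x n) = ‖x n‖)
    {y : X} (hy : ∀ n, x' n y = 0) : y = 0 := by
  by_contra hy0
  have hpos : 0 < ‖y‖ := norm_pos_iff.mpr hy0
  obtain ⟨n, hn⟩ := Metric.denseRange_iff.mp hx y (‖y‖ / 2) (by positivity)
  rw [dist_comm, dist_eq_norm] at hn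
  have hxn : ‖x n‖ ≤ ‖x n - y‖ :=
    calc ‖x n‖ = x' n (x n - y) := by rw [map_sub, hy, hnorming, sub_zero]
      _ ≤ ‖x' n (x n - y)‖ := Real.le_norm_self _
      _ ≤ ‖x' n‖ * ‖x n - y‖ := (x' n).le_opNorm _
      _ ≤ ‖x n - y‖ := mul_le_of_le_one_left (norm_nonneg _) (hnorm n)
  linarith [norm_le_norm_add_norm_sub' y (x n), norm_sub_rev y (x n)]

theorem injective_norming_coordinates {x : ℕ → X} (hx : DenseRange x)
    {x' : ℕ → X →L[ℝ] ℝ} (hnorm : ∀ n, ‖x' n‖ ≤ 1) (hnorming : ∀ n, x' n (x n) = ‖x n‖) :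
    Function.Injective (fun y n => x' n y) := fun y z hyz =>
  sub_eq_zero.mp <| eq_zero_of_forall_norming_apply_eq_zero hx hnorm hnorming fun n => by
    rw [map_sub, sub_eq_zero]
    exact congrFun hyz n

end Norming

section Cadlag

variable {α : Type*} [LinearOrder α] [TopologicalSpace α]
  {X Z : Type*} [TopologicalSpace X] [TopologicalSpace Z] [T2Space Z]
  {G : X → Z} {f : α → X}

theorem continuousAt_of_continuousWithinAt_Ici_of_injective_comp (hG : Continuous G)
    (hGinj : Function.Injective G) {t : α} (hright : ContinuousWithinAt f (Ici t) t)
    (hleft : ∃ L, Tendsto f (𝓝[<] t) (𝓝 L)) (hGf : ContinuousAt (G ∘ f) t) :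
    ContinuousAt f t := by
  have hleft' : Tendsto f (𝓝[<] t) (𝓝 (f t)) := by
    rcases (𝓝[<] t).eq_or_neBot with hbot | hne
    · simp [hbot]
    obtain ⟨L, hL⟩ := hleft
    have hGL : G L = G (f t) :=
      tendsto_nhds_unique ((hG.tendsto L).comp hL) (hGf.tendsto.mono_left nhdsWithin_le_nhds)
    rwa [← hGinj hGL]
  rw [ContinuousAt, ← nhdsLT_sup_nhdsGE]
  exact hleft'.sup hright

theorem continuous_of_cadlag_of_injective_comp [OrderBot α] (hG : Continuous G)
    (hGinj : Function.Injective G) (hright : ∀ t, ContinuousWithinAt f (Ici t) t)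
    (hleft : ∀ t, ⊥ < t → ∃ L, Tendsto f (𝓝[<] t) (𝓝 L)) (hGf : Continuous (G ∘ f)) :
    Continuous f := by
  refine continuous_iff_continuousAt.mpr fun t =>
    continuousAt_of_continuousWithinAt_Ici_of_injective_comp hG hGinj (hright t) ?_ hGf.continuousAt
  rcases eq_bot_or_bot_lt t with rfl | ht
  · exact ⟨f ⊥, by simp⟩
  · exact hleft t ht

end Cadlag

theorem continuous_paths_iff_norming_functionals_general
    {Ω : Type*} {mΩ : MeasurableSpace Ω} (μ : Measure Ω)
    (X : Type*) [NormedAddCommGroup X] [NormedSpace ℝ X]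
    (x : ℕ → X) (hx : DenseRange x)
    (x' : ℕ → X →L[ℝ] ℝ) (hnorming : ∀ n, ‖x' n‖ = 1 ∧ x' n (x n) = ‖x n‖)
    (M : ℝ≥0 → Ω → X)
    (hright : ∀ ω, ∀ t : ℝ≥0, ContinuousWithinAt (fun s => M s ω) (Set.Ici t) t)
    (hleft : ∀ ω, ∀ t : ℝ≥0, 0 < t → ∃ L : X, Tendsto (fun s => M s ω) (𝓝[<] t) (𝓝 L)) :
    (∀ᵐ ω ∂μ, Continuous (fun t : ℝ≥0 => M t ω)) ↔
      ∀ n : ℕ, ∀ᵐ ω ∂μ, Continuous (fun t : ℝ≥0 => x' n (M t ω)) := by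
  refine ⟨fun h n => h.mono fun ω hω => (x' n).continuous.comp hω, fun h => ?_⟩
  have hinj := injective_norming_coordinates hx (fun n => (hnorming n).1.le) fun n => (hnorming n).2
  filter_upwards [ae_all_iff.mpr h] with ω hω
  exact continuous_of_cadlag_of_injective_comp (continuous_pi fun n => (x' n).continuous) hinj
    (hright ω) (hleft ω) (continuous_pi hω)

/-- For a càdlàg `X`-valued process `M` and a norming sequence `(x'_n)` of functionals for a
dense sequence `(x_n)`, a.e. path of `M` is continuous if and only if for every `n` a.e. path
of `⟨M, x'_n⟩` is continuous. -/
theorem continuous_paths_iff_norming_functionals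
    {Ω : Type*} {mΩ : MeasurableSpace Ω} (μ : Measure Ω) [IsProbabilityMeasure μ]
    (X : Type*) [NormedAddCommGroup X] [NormedSpace ℝ X] [CompleteSpace X]
    (x : ℕ → X) (hx : DenseRange x)
    (x' : ℕ → X →L[ℝ] ℝ) (hnorming : ∀ n, ‖x' n‖ = 1 ∧ x' n (x n) = ‖x n‖)
    (M : ℝ≥0 → Ω → X)
    (hright : ∀ ω, ∀ t : ℝ≥0, ContinuousWithinAt (fun s => M s ω) (Set.Ici t) t)
    (hleft : ∀ ω, ∀ t : ℝ≥0, 0 < t → ∃ L : X, Tendsto (fun s => M s ω) (𝓝[<] t) (𝓝 L)) :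
    (∀ᵐ ω ∂μ, Continuous (fun t : ℝ≥0 => M t ω)) ↔
      ∀ n : ℕ, ∀ᵐ ω ∂μ, Continuous (fun t : ℝ≥0 => x' n (M t ω)) :=
  continuous_paths_iff_norming_functionals_general (mΩ := mΩ) μ X x hx x' hnorming M hright hleft
end

section
/- Let X be a separable Banach space, let (x_n)_{n≥1} be a dense sequence in X, and let (x_n^*)_{n≥1} ⊆ X^* be a norming sequence for it, i.e., ‖x_n^*‖ = 1 and ⟨x_n, x_n^*⟩ = ‖x_n‖ for every n. Let (Ω,F,P) be a probability space with a filtration (F_t)_{t≥0}, and let M : [0,∞) × Ω → X be an adapted process all of whose paths are càdlàg. Then: (III) M is quasi-left continuous if and only if for every n ≥ 1 the real-valued process t ↦ ⟨M_t, x_n^*⟩ is quasi-left continuous; and (IV) M has accessible jumps if and only if for every n ≥ 1 the process t ↦ ⟨M_t, x_n^*⟩ has accessible jumps. -/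
open MeasureTheory ProbabilityTheory Filter Set
open scoped ENNReal NNReal Topology

/-- `τ` is a predictable stopping time: it is a stopping time announced by a nondecreasing
sequence of stopping times `τs` with `τs k < τ` a.s. on `{τ > 0}` and `τs k → τ` a.s. -/
def IsPredictableTime {Ω : Type*} {mΩ : MeasurableSpace Ω} (μ : Measure Ω)
    (ℱ : Filtration ℝ≥0 mΩ) (τ : Ω → ℝ≥0) : Prop :=
  IsStoppingTime ℱ (fun ω => (τ ω : WithTop ℝ≥0)) ∧ ∃ τs : ℕ → Ω → ℝ≥0, (∀ k, IsStoppingTime ℱ (fun ω => (τs k ω : WithTop ℝ≥0))) ∧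
    (∀ k ω, τs k ω ≤ τs (k + 1) ω) ∧
    (∀ᵐ ω ∂μ, 0 < τ ω → ∀ k, τs k ω < τ ω) ∧
    (∀ᵐ ω ∂μ, Tendsto (fun k => τs k ω) atTop (𝓝 (τ ω)))

/-- `τ` is a totally inaccessible stopping time: `P(τ = σ) = 0` for every predictable
stopping time `σ`. -/
def IsTotallyInaccessibleTime {Ω : Type*} {mΩ : MeasurableSpace Ω} (μ : Measure Ω)
    (ℱ : Filtration ℝ≥0 mΩ) (τ : Ω → ℝ≥0) : Prop :=
  IsStoppingTime ℱ (fun ω => (τ ω : WithTop ℝ≥0)) ∧ ∀ σ : Ω → ℝ≥0, IsPredictableTime μ ℱ σ → μ {ω | τ ω = σ ω} = 0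

/-- The (càdlàg) process `A` has zero jump at the random time `τ` almost surely: for a.e. `ω`
with `τ ω > 0` the left limit of `s ↦ A s ω` at `τ ω` equals `A (τ ω) ω`. -/
def HasZeroJumpAt {Ω E : Type*} [TopologicalSpace E] {mΩ : MeasurableSpace Ω}
    (μ : Measure Ω) (A : ℝ≥0 → Ω → E) (τ : Ω → ℝ≥0) : Prop :=
  ∀ᵐ ω ∂μ, 0 < τ ω → Tendsto (fun s => A s ω) (𝓝[<] (τ ω)) (𝓝 (A (τ ω) ω))

/-- A process is quasi-left continuous if it has zero jump at every predictable stopping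
time. -/
def IsQuasiLeftContinuous {Ω E : Type*} [TopologicalSpace E] {mΩ : MeasurableSpace Ω}
    (μ : Measure Ω) (ℱ : Filtration ℝ≥0 mΩ) (A : ℝ≥0 → Ω → E) : Prop :=
  ∀ τ : Ω → ℝ≥0, IsPredictableTime μ ℱ τ → HasZeroJumpAt μ A τ

/-- A process has accessible jumps if it has zero jump at every totally inaccessible stopping
time. -/
def HasAccessibleJumps {Ω E : Type*} [TopologicalSpace E] {mΩ : MeasurableSpace Ω}
    (μ : Measure Ω) (ℱ : Filtration ℝ≥0 mΩ) (A : ℝ≥0 → Ω → E) : Prop :=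
  ∀ τ : Ω → ℝ≥0, IsTotallyInaccessibleTime μ ℱ τ → HasZeroJumpAt μ A τ

/-! If every functional `x' n` of a norming sequence vanishes at `z`, then
`‖x n‖ = x' n (x n - z) ≤ ‖x n - z‖`, so `‖z‖ ≤ 2 ‖x n - z‖` for all `n`; this closed
condition passes to the limit `x n → z`, forcing `z = 0`. Hence the `x' n` separate points, and
since they are continuous, the left limit of a path of `M` is pinned down by the left limits of
the scalar paths `x' n ∘ M`; the countably many exceptional null sets can be discarded at once. -/

lemma eq_of_forall_apply_eq_of_norming {X : Type*} [NormedAddCommGroup X] [NormedSpace ℝ X]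
    {x : ℕ → X} (hx : DenseRange x) {x' : ℕ → X →L[ℝ] ℝ}
    (hnorming : ∀ n, ‖x' n‖ ≤ 1 ∧ x' n (x n) = ‖x n‖) {a b : X}
    (hab : ∀ n, x' n a = x' n b) : a = b := by
  set z := a - b
  have hz : ∀ n, x' n z = 0 := fun n => by simp [z, hab n]
  have hbound : ∀ y, ‖z‖ ≤ 2 * ‖y - z‖ := by
    refine fun y => hx.induction_on y (isClosed_le continuous_const (by fun_prop)) fun n => ?_
    have hxn : ‖x n‖ ≤ ‖x n - z‖ :=
      calc ‖x n‖ = x' n (x n - z) := by rw [map_sub, hz, sub_zero, (hnorming n).2]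
        _ ≤ ‖x' n‖ * ‖x n - z‖ := (le_abs_self _).trans ((x' n).le_opNorm _)
        _ ≤ ‖x n - z‖ := mul_le_of_le_one_left (norm_nonneg _) (hnorming n).1
    linarith [norm_le_norm_add_norm_sub (x n) z]
  have : ‖z‖ ≤ 0 := by simpa using hbound z
  exact sub_eq_zero.mp (norm_le_zero_iff.mp this)

section ZeroJump

variable {Ω E F ι : Type*} {mΩ : MeasurableSpace Ω} [TopologicalSpace E] [TopologicalSpace F]
  {μ : Measure Ω} {A : ℝ≥0 → Ω → E} {τ : Ω → ℝ≥0}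

lemma HasZeroJumpAt.comp {f : E → F} (hf : Continuous f) (hA : HasZeroJumpAt μ A τ) :
    HasZeroJumpAt μ (fun t ω => f (A t ω)) τ := by
  filter_upwards [hA] with ω hω hτ
  exact (hf.tendsto _).comp (hω hτ)

variable [T2Space F] [Countable ι] {f : ι → E → F}

lemma HasZeroJumpAt.of_forall_comp (hf : ∀ i, Continuous (f i))
    (hsep : ∀ a b, (∀ i, f i a = f i b) → a = b)
    (hleft : ∀ ω, ∀ t : ℝ≥0, 0 < t → ∃ L, Tendsto (fun s => A s ω) (𝓝[<] t) (𝓝 L))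
    (h : ∀ i, HasZeroJumpAt μ (fun t ω => f i (A t ω)) τ) : HasZeroJumpAt μ A τ := by
  filter_upwards [ae_all_iff.mpr h] with ω hω hτ
  obtain ⟨L, hL⟩ := hleft ω (τ ω) hτ
  have : (𝓝[<] (τ ω)).NeBot := nhdsLT_neBot_of_exists_lt ⟨0, hτ⟩
  suffices hLA : L = A (τ ω) ω from hLA ▸ hL
  exact hsep _ _ fun i => tendsto_nhds_unique (((hf i).tendsto L).comp hL) (hω i hτ)

variable (hf : ∀ i, Continuous (f i)) (hsep : ∀ a b, (∀ i, f i a = f i b) → a = b)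
  (hleft : ∀ ω, ∀ t : ℝ≥0, 0 < t → ∃ L, Tendsto (fun s => A s ω) (𝓝[<] t) (𝓝 L))
include hf hsep hleft

lemma hasZeroJumpAt_iff_forall_comp :
    HasZeroJumpAt μ A τ ↔ ∀ i, HasZeroJumpAt μ (fun t ω => f i (A t ω)) τ :=
  ⟨fun hA i => hA.comp (hf i), HasZeroJumpAt.of_forall_comp hf hsep hleft⟩

lemma isQuasiLeftContinuous_iff_forall_comp (ℱ : Filtration ℝ≥0 mΩ) :
    IsQuasiLeftContinuous μ ℱ A ↔ ∀ i, IsQuasiLeftContinuous μ ℱ (fun t ω => f i (A t ω)) := by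
  simp only [IsQuasiLeftContinuous, hasZeroJumpAt_iff_forall_comp hf hsep hleft]
  exact ⟨fun h i τ hτ => h τ hτ i, fun h τ hτ i => h i τ hτ⟩

lemma hasAccessibleJumps_iff_forall_comp (ℱ : Filtration ℝ≥0 mΩ) :
    HasAccessibleJumps μ ℱ A ↔ ∀ i, HasAccessibleJumps μ ℱ (fun t ω => f i (A t ω)) := by
  simp only [HasAccessibleJumps, hasZeroJumpAt_iff_forall_comp hf hsep hleft]
  exact ⟨fun h i τ hτ => h τ hτ i, fun h τ hτ i => h i τ hτ⟩

end ZeroJump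

theorem quasiLeftContinuous_and_accessibleJumps_iff_norming_functionals_general
    {Ω : Type*} {mΩ : MeasurableSpace Ω} (μ : Measure Ω)
    (X : Type*) [NormedAddCommGroup X] [NormedSpace ℝ X]
    (x : ℕ → X) (hx : DenseRange x)
    (x' : ℕ → X →L[ℝ] ℝ) (hnorming : ∀ n, ‖x' n‖ = 1 ∧ x' n (x n) = ‖x n‖)
    (ℱ : Filtration ℝ≥0 mΩ) (M : ℝ≥0 → Ω → X)
    (hleft : ∀ ω, ∀ t : ℝ≥0, 0 < t → ∃ L : X, Tendsto (fun s => M s ω) (𝓝[<] t) (𝓝 L)) :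
    (IsQuasiLeftContinuous μ ℱ M ↔
      ∀ n : ℕ, IsQuasiLeftContinuous μ ℱ (fun t ω => x' n (M t ω))) ∧
    (HasAccessibleJumps μ ℱ M ↔
      ∀ n : ℕ, HasAccessibleJumps μ ℱ (fun t ω => x' n (M t ω))) := by
  have hsep : ∀ a b, (∀ n, x' n a = x' n b) → a = b := fun _ _ =>
    eq_of_forall_apply_eq_of_norming hx fun n => ⟨(hnorming n).1.le, (hnorming n).2⟩
  have hcont : ∀ n, Continuous (x' n) := fun n => (x' n).continuous
  exact ⟨isQuasiLeftContinuous_iff_forall_comp hcont hsep hleft ℱ,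
    hasAccessibleJumps_iff_forall_comp hcont hsep hleft ℱ⟩

/-- Quasi-left continuity and accessibility of jumps of a càdlàg adapted `X`-valued process can
be tested against a norming sequence of functionals. -/
theorem quasiLeftContinuous_and_accessibleJumps_iff_norming_functionals
    {Ω : Type*} {mΩ : MeasurableSpace Ω} (μ : Measure Ω) [IsProbabilityMeasure μ]
    (X : Type*) [NormedAddCommGroup X] [NormedSpace ℝ X] [CompleteSpace X]
    (x : ℕ → X) (hx : DenseRange x)
    (x' : ℕ → X →L[ℝ] ℝ) (hnorming : ∀ n, ‖x' n‖ = 1 ∧ x' n (x n) = ‖x n‖)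
    (ℱ : Filtration ℝ≥0 mΩ) (M : ℝ≥0 → Ω → X) (hadapted : StronglyAdapted ℱ M)
    (hright : ∀ ω, ∀ t : ℝ≥0, ContinuousWithinAt (fun s => M s ω) (Set.Ici t) t)
    (hleft : ∀ ω, ∀ t : ℝ≥0, 0 < t → ∃ L : X, Tendsto (fun s => M s ω) (𝓝[<] t) (𝓝 L)) :
    (IsQuasiLeftContinuous μ ℱ M ↔
      ∀ n : ℕ, IsQuasiLeftContinuous μ ℱ (fun t ω => x' n (M t ω))) ∧
    (HasAccessibleJumps μ ℱ M ↔
      ∀ n : ℕ, HasAccessibleJumps μ ℱ (fun t ω => x' n (M t ω))) :=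
  quasiLeftContinuous_and_accessibleJumps_iff_norming_functionals_general μ X x hx x' hnorming ℱ M
    hleft
end

section
/- Let X be a separable Banach space with its Borel σ-algebra and let N ≥ 1. Let (ξ_n)_{n=1}^N and (ξ'_n)_{n=1}^N be X-valued random variables on a probability space (Ω,F,P) such that the ξ_1,…,ξ_N are mutually independent, the ξ'_1,…,ξ'_N are mutually independent, each ξ_n and each ξ'_n is symmetric (i.e., has the same distribution as its negative), and for every n and every Borel set A ⊆ X with 0 ∉ A one has P(ξ'_n ∈ A) ≤ P(ξ_n ∈ A). Then for every continuous convex function φ : X → [0,∞) which is even (φ(−x) = φ(x) for all x ∈ X) one has E φ(Σ_{n=1}^N ξ'_n) ≤ E φ(Σ_{n=1}^N ξ_n), where both expectations are taken in [0,∞]. -/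
open MeasureTheory ProbabilityTheory Set
open scoped ENNReal

/-!
By independence, the law of `∑ ξ n` is the convolution of the laws of the `ξ n`. Order measures
on `X` by `ρ' ≼ ρ` iff `∫ Ψ dρ' ≤ ∫ Ψ dρ` for every even midpoint-convex `Ψ : X → [0,∞]`.
Each law of `ξ' n` is below that of `ξ n`, because such a `Ψ` is minimal at `0` and the two laws
have the same mass while `P(ξ' n ∈ ·) ≤ P(ξ n ∈ ·)` away from `0`. The order is preserved by
convolution with symmetric factors: integrating `Ψ (a + t)` in `t` against a symmetric law gives
again an even midpoint-convex function of `a`, so the factors can be exchanged one at a time.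
-/

lemma lintegral_le_lintegral_of_restrict_compl_singleton_le {α : Type*} [MeasurableSpace α]
    {ρ ρ' : Measure α} {x₀ : α} (huniv : ρ' univ ≤ ρ univ)
    (hle : ρ'.restrict {x₀}ᶜ ≤ ρ.restrict {x₀}ᶜ) {h : α → ℝ≥0∞}
    (hmin : ∀ x, h x₀ ≤ h x) :
    ∫⁻ x, h x ∂ρ' ≤ ∫⁻ x, h x ∂ρ := by
  have hsplit : ∀ ν : Measure α,
      ∫⁻ x, h x ∂ν = ∫⁻ x in {x₀}ᶜ, (h x - h x₀) ∂ν + h x₀ * ν univ := by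
    intro ν
    have hsupp : (fun x => h x - h x₀).support ⊆ {x₀}ᶜ := by
      intro x hx hx₀
      simp [Set.mem_singleton_iff.1 hx₀] at hx
    rw [setLIntegral_eq_of_support_subset hsupp, ← lintegral_const,
      ← lintegral_add_right _ measurable_const]
    simp_rw [tsub_add_cancel_of_le (hmin _)]
  rw [hsplit ρ, hsplit ρ']
  gcongr

section

variable {X : Type*} [AddCommGroup X]

/-- Midpoint convexity in `ℝ≥0∞` rather than convexity of a real function, because smoothing
`Ψ` against a measure may produce the value `∞`. -/
structure EvenMidpointConvex (Ψ : X → ℝ≥0∞) : Prop where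
  even : ∀ x, Ψ (-x) = Ψ x
  two_mul_le : ∀ x a, 2 * Ψ x ≤ Ψ (x + a) + Ψ (x - a)

namespace EvenMidpointConvex

variable {Ψ : X → ℝ≥0∞}

theorem apply_zero_le (hΨ : EvenMidpointConvex Ψ) (x : X) : Ψ 0 ≤ Ψ x := by
  have h := hΨ.two_mul_le 0 x
  rwa [zero_add, zero_sub, hΨ.even, ← two_mul,
    ENNReal.mul_le_mul_iff_right two_ne_zero ENNReal.ofNat_ne_top] at h

theorem ofReal_comp {E : Type*} [AddCommGroup E] [Module ℝ E] {φ : E → ℝ}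
    (hconv : ConvexOn ℝ univ φ) (heven : ∀ x, φ (-x) = φ x) :
    EvenMidpointConvex fun x => ENNReal.ofReal (φ x) where
  even x := by rw [heven]
  two_mul_le x a := by
    have hmid := hconv.2 (mem_univ (x + a)) (mem_univ (x - a)) (by norm_num : (0 : ℝ) ≤ 1 / 2)
      (by norm_num : (0 : ℝ) ≤ 1 / 2) (by norm_num)
    rw [show (1 / 2 : ℝ) • (x + a) + (1 / 2 : ℝ) • (x - a) = x by module, smul_eq_mul,
      smul_eq_mul] at hmid
    calc 2 * ENNReal.ofReal (φ x) = ENNReal.ofReal (2 * φ x) := by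
          rw [ENNReal.ofReal_mul zero_le_two, ENNReal.ofReal_ofNat]
      _ ≤ ENNReal.ofReal (φ (x + a) + φ (x - a)) := ENNReal.ofReal_le_ofReal (by linarith)
      _ ≤ _ := ENNReal.ofReal_add_le

theorem lintegral_comp_add [MeasurableSpace X] [MeasurableAdd X] [MeasurableNeg X]
    (hΨm : Measurable Ψ) (hΨ : EvenMidpointConvex Ψ) (ν : Measure X) [ν.IsNegInvariant] :
    EvenMidpointConvex fun x => ∫⁻ y, Ψ (x + y) ∂ν where
  even x := by
    rw [← lintegral_neg_eq_self]
    simp_rw [← neg_add, hΨ.even]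
  two_mul_le x a := by
    have hm : Measurable fun y => Ψ (x + a + y) := hΨm.comp (measurable_const_add _)
    rw [← lintegral_const_mul' _ _ ENNReal.ofNat_ne_top, ← lintegral_add_left hm]
    refine lintegral_mono fun y => ?_
    simpa only [add_right_comm, sub_add_eq_add_sub] using hΨ.two_mul_le (x + y) a

end EvenMidpointConvex

variable [MeasurableSpace X]

def EvenConvexLE (ρ' ρ : Measure X) : Prop :=
  ∀ Ψ : X → ℝ≥0∞, Measurable Ψ → EvenMidpointConvex Ψ → ∫⁻ x, Ψ x ∂ρ' ≤ ∫⁻ x, Ψ x ∂ρ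

theorem evenConvexLE_of_le_of_zero_notMem [MeasurableSingletonClass X] {ρ' ρ : Measure X}
    (huniv : ρ' univ ≤ ρ univ) (hle : ∀ A, MeasurableSet A → (0 : X) ∉ A → ρ' A ≤ ρ A) :
    EvenConvexLE ρ' ρ := by
  refine fun Ψ hΨm hΨ => lintegral_le_lintegral_of_restrict_compl_singleton_le huniv ?_
    hΨ.apply_zero_le
  refine Measure.le_iff.2 fun A hA => ?_
  rw [Measure.restrict_apply hA, Measure.restrict_apply hA]
  exact hle _ (hA.inter (measurableSet_singleton 0).compl) fun h => h.2 rfl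

theorem EvenConvexLE.conv [MeasurableAdd₂ X] [MeasurableNeg X] {ρ' ρ σ' σ : Measure X}
    [SFinite ρ'] [SFinite σ'] [SFinite σ] [ρ'.IsNegInvariant] [σ.IsNegInvariant]
    (hρ : EvenConvexLE ρ' ρ) (hσ : EvenConvexLE σ' σ) : EvenConvexLE (ρ' ∗ σ') (ρ ∗ σ) := by
  intro Ψ hΨm hΨ
  have hmeas : Measurable (Function.uncurry fun a t => Ψ (a + t)) := hΨm.comp measurable_add
  have hsmooth : ∀ (ν : Measure X) [SFinite ν] [ν.IsNegInvariant],
      Measurable (fun x => ∫⁻ y, Ψ (x + y) ∂ν) ∧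
        EvenMidpointConvex (fun x => ∫⁻ y, Ψ (x + y) ∂ν) :=
    fun ν _ _ => ⟨hmeas.lintegral_prod_right', hΨ.lintegral_comp_add hΨm ν⟩
  calc ∫⁻ z, Ψ z ∂(ρ' ∗ σ')
      = ∫⁻ t, ∫⁻ a, Ψ (t + a) ∂ρ' ∂σ' := by
        rw [Measure.lintegral_conv hΨm, lintegral_lintegral_swap hmeas.aemeasurable]
        simp_rw [add_comm]
    _ ≤ ∫⁻ t, ∫⁻ a, Ψ (t + a) ∂ρ' ∂σ := hσ _ (hsmooth ρ').1 (hsmooth ρ').2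
    _ = ∫⁻ a, ∫⁻ t, Ψ (a + t) ∂σ ∂ρ' := by
        rw [lintegral_lintegral_swap hmeas.aemeasurable]
        simp_rw [add_comm]
    _ ≤ ∫⁻ a, ∫⁻ t, Ψ (a + t) ∂σ ∂ρ := hρ _ (hsmooth σ).1 (hsmooth σ).2
    _ = ∫⁻ z, Ψ z ∂(ρ ∗ σ) := (Measure.lintegral_conv hΨm).symm

instance MeasureTheory.Measure.isNegInvariant_conv [MeasurableAdd₂ X] [MeasurableNeg X]
    (ρ σ : Measure X) [SFinite ρ] [SFinite σ] [ρ.IsNegInvariant] [σ.IsNegInvariant] :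
    (ρ ∗ σ).IsNegInvariant := by
  constructor
  have hodd : Neg.neg ∘ (fun z : X × X => z.1 + z.2) =
      (fun z => z.1 + z.2) ∘ Prod.map Neg.neg Neg.neg :=
    funext fun z => neg_add z.1 z.2
  rw [Measure.neg_def, Measure.conv, Measure.map_map measurable_neg measurable_add, hodd,
    ← Measure.map_map measurable_add (measurable_neg.prodMap measurable_neg),
    ← Measure.map_prod_map _ _ measurable_neg measurable_neg, Measure.map_neg_eq_self,
    Measure.map_neg_eq_self]

end

namespace ProbabilityTheory

variable {Ω X ι : Type*} {mΩ : MeasurableSpace Ω} {μ : Measure Ω} [AddCommGroup X]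
  [MeasurableSpace X] [MeasurableNeg X]

theorem isNegInvariant_map_iff {f : Ω → X} (hf : Measurable f) :
    (μ.map f).IsNegInvariant ↔ μ.map (fun ω => -f ω) = μ.map f := by
  have hneg : (μ.map f).neg = μ.map (fun ω => -f ω) := by
    rw [Measure.neg_def, Measure.map_map measurable_neg hf]
    rfl
  rw [← hneg]
  exact ⟨fun h => h.1, fun h => ⟨h⟩⟩

variable [MeasurableAdd₂ X] [IsFiniteMeasure μ] {ξ ξ' : ι → Ω → X}

theorem iIndepFun.isNegInvariant_map_finsetSum (hξ : iIndepFun ξ μ) (hm : ∀ i, Measurable (ξ i))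
    (hsymm : ∀ i, (μ.map (ξ i)).IsNegInvariant) (s : Finset ι) :
    (μ.map (∑ i ∈ s, ξ i)).IsNegInvariant := by
  classical
  induction s using Finset.induction_on with
  | empty =>
    rw [Finset.sum_empty, isNegInvariant_map_iff measurable_zero]
    simp only [Pi.zero_apply, neg_zero]
    rfl
  | insert i s hi ih =>
    rw [Finset.sum_insert hi, add_comm,
      (hξ.indepFun_finsetSum_of_notMem hm hi).map_add_eq_map_conv_map (by fun_prop) (hm i)]
    infer_instance

theorem iIndepFun.evenConvexLE_map_finsetSum [MeasurableSingletonClass X] (hξ : iIndepFun ξ μ)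
    (hξ' : iIndepFun ξ' μ) (hm : ∀ i, Measurable (ξ i)) (hm' : ∀ i, Measurable (ξ' i))
    (hsymm : ∀ i, (μ.map (ξ i)).IsNegInvariant) (hsymm' : ∀ i, (μ.map (ξ' i)).IsNegInvariant)
    (hdom : ∀ i A, MeasurableSet A → (0 : X) ∉ A → μ (ξ' i ⁻¹' A) ≤ μ (ξ i ⁻¹' A))
    (s : Finset ι) : EvenConvexLE (μ.map (∑ i ∈ s, ξ' i)) (μ.map (∑ i ∈ s, ξ i)) := by
  classical
  induction s using Finset.induction_on with
  | empty => exact fun _ _ _ => le_rfl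
  | insert i s hi ih =>
    have := hξ'.isNegInvariant_map_finsetSum hm' hsymm' s
    have hi_le : EvenConvexLE (μ.map (ξ' i)) (μ.map (ξ i)) := by
      refine evenConvexLE_of_le_of_zero_notMem ?_ fun A hA h0 => ?_
      · rw [Measure.map_apply (hm' i) .univ, Measure.map_apply (hm i) .univ, preimage_univ,
          preimage_univ]
      · rw [Measure.map_apply (hm' i) hA, Measure.map_apply (hm i) hA]
        exact hdom i A hA h0
    rw [Finset.sum_insert hi, Finset.sum_insert hi, add_comm, add_comm (ξ i),
      (hξ.indepFun_finsetSum_of_notMem hm hi).map_add_eq_map_conv_map (by fun_prop) (hm i),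
      (hξ'.indepFun_finsetSum_of_notMem hm' hi).map_add_eq_map_conv_map (by fun_prop) (hm' i)]
    exact ih.conv hi_le

end ProbabilityTheory

theorem sum_indep_symmetric_domination_general
    {Ω X : Type*} [NormedAddCommGroup X] [NormedSpace ℝ X]
    [TopologicalSpace.SeparableSpace X] [MeasurableSpace X] [BorelSpace X]
    {mΩ : MeasurableSpace Ω} (μ : Measure Ω) [IsProbabilityMeasure μ]
    (N : ℕ) (ξ ξ' : Fin N → Ω → X)
    (hmeas : ∀ n, Measurable (ξ n)) (hmeas' : ∀ n, Measurable (ξ' n))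
    (hindep : iIndepFun ξ μ)
    (hindep' : iIndepFun ξ' μ)
    (hsymm : ∀ n, μ.map (ξ n) = μ.map (fun ω => -(ξ n ω)))
    (hsymm' : ∀ n, μ.map (ξ' n) = μ.map (fun ω => -(ξ' n ω)))
    (hdom : ∀ n, ∀ A : Set X, MeasurableSet A → (0 : X) ∉ A →
      μ (ξ' n ⁻¹' A) ≤ μ (ξ n ⁻¹' A))
    (φ : X → ℝ) (hcont : Continuous φ) (hconv : ConvexOn ℝ Set.univ φ)
    (heven : ∀ x : X, φ (-x) = φ x) :
    ∫⁻ ω, ENNReal.ofReal (φ (∑ n : Fin N, ξ' n ω)) ∂μ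
      ≤ ∫⁻ ω, ENNReal.ofReal (φ (∑ n : Fin N, ξ n ω)) ∂μ := by
  have := UniformSpace.secondCountable_of_separable X
  have horder := hindep.evenConvexLE_map_finsetSum hindep' hmeas hmeas'
    (fun n => (isNegInvariant_map_iff (hmeas n)).2 (hsymm n).symm)
    (fun n => (isNegInvariant_map_iff (hmeas' n)).2 (hsymm' n).symm) hdom Finset.univ
  have hΨm : Measurable fun x => ENNReal.ofReal (φ x) := hcont.measurable.ennreal_ofReal
  have key := horder _ hΨm (EvenMidpointConvex.ofReal_comp hconv heven)
  rw [lintegral_map hΨm (by fun_prop), lintegral_map hΨm (by fun_prop)] at key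
  simpa only [Finset.sum_apply] using key

/-- **Stochastic domination for sums of independent symmetric random variables.** If the
`ξ' n` are independent symmetric, the `ξ n` are independent symmetric, and
`P(ξ' n ∈ A) ≤ P(ξ n ∈ A)` for all Borel `A` not containing `0`, then
`E φ(∑ ξ' n) ≤ E φ(∑ ξ n)` for every continuous convex even `φ ≥ 0` (in `[0,∞]`). -/
theorem sum_indep_symmetric_domination
    {Ω X : Type*} [NormedAddCommGroup X] [NormedSpace ℝ X] [CompleteSpace X]
    [TopologicalSpace.SeparableSpace X] [MeasurableSpace X] [BorelSpace X]
    {mΩ : MeasurableSpace Ω} (μ : Measure Ω) [IsProbabilityMeasure μ]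
    (N : ℕ) (ξ ξ' : Fin N → Ω → X)
    (hmeas : ∀ n, Measurable (ξ n)) (hmeas' : ∀ n, Measurable (ξ' n))
    (hindep : iIndepFun ξ μ)
    (hindep' : iIndepFun ξ' μ)
    (hsymm : ∀ n, μ.map (ξ n) = μ.map (fun ω => -(ξ n ω)))
    (hsymm' : ∀ n, μ.map (ξ' n) = μ.map (fun ω => -(ξ' n ω)))
    (hdom : ∀ n, ∀ A : Set X, MeasurableSet A → (0 : X) ∉ A →
      μ (ξ' n ⁻¹' A) ≤ μ (ξ n ⁻¹' A))
    (φ : X → ℝ) (hcont : Continuous φ) (hconv : ConvexOn ℝ Set.univ φ)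
    (heven : ∀ x : X, φ (-x) = φ x) (hnonneg : ∀ x : X, 0 ≤ φ x) :
    ∫⁻ ω, ENNReal.ofReal (φ (∑ n : Fin N, ξ' n ω)) ∂μ
      ≤ ∫⁻ ω, ENNReal.ofReal (φ (∑ n : Fin N, ξ n ω)) ∂μ :=
  sum_indep_symmetric_domination_general (mΩ := mΩ) μ N ξ ξ' hmeas hmeas' hindep hindep' hsymm
    hsymm' hdom φ hcont hconv heven
end
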